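/- Let N be a binary phylogenetic network such that for every reticulation r, either (i) both parents of r are tree-vertices, or (ii) one parent of r is a tree-vertex and the sibling of r under that tree-vertex parent is a tree-vertex or a leaf. Then N is tree-based. -/

import Mathlib

/-- Out-degree of `v` in the digraph with arc relation `arc`. -/
def outdeg {V : Type} [Fintype V] [DecidableEq V] (arc : V → V → Bool) (v : V) : ℕ :=
  (Finset.univ.filter fun w => arc v w = true).card

/-- In-degree of `v` in the digraph with arc relation `arc`. -/
def indeg {V : Type} [Fintype V] [DecidableEq V] (arc : V → V → Bool) (v : V) : ℕ :=
  (Finset.univ.filter fun u => arc u v = true).card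

/-- A rooted binary phylogenetic network on the finite vertex type `V`:
a directed acyclic graph with a single root of indegree 0 and outdegree 1 or 2,
all other vertices being leaves (indegree 1, outdegree 0),
reticulations (indegree 2, outdegree 1) or tree-vertices (indegree 1, outdegree 2). -/
structure BinNet (V : Type) [Fintype V] [DecidableEq V] where
  arc : V → V → Bool
  root : V
  acyclic : ∀ v, ¬ Relation.TransGen (fun a b => arc a b = true) v v
  root_indeg : indeg arc root = 0
  root_outdeg : outdeg arc root = 1 ∨ outdeg arc root = 2
  vertex_types : ∀ v, v ≠ root →
    (indeg arc v = 1 ∧ outdeg arc v = 0) ∨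
    (indeg arc v = 2 ∧ outdeg arc v = 1) ∨
    (indeg arc v = 1 ∧ outdeg arc v = 2)

variable {V : Type} [Fintype V] [DecidableEq V]

/-- A leaf of the network. -/
def BinNet.IsLeaf (N : BinNet V) (v : V) : Prop := outdeg N.arc v = 0

/-- A reticulation of the network. -/
def BinNet.IsRetic (N : BinNet V) (v : V) : Prop := indeg N.arc v = 2

/-- A tree-vertex of the network. -/
def BinNet.IsTreeVertex (N : BinNet V) (v : V) : Prop :=
  v ≠ N.root ∧ indeg N.arc v = 1 ∧ outdeg N.arc v = 2

/-- An omnian: a non-leaf vertex all of whose children are reticulations. -/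
def BinNet.IsOmnian (N : BinNet V) (v : V) : Prop :=
  outdeg N.arc v ≠ 0 ∧ ∀ w, N.arc v w = true → N.IsRetic w

/-- `T` is a rooted spanning tree of `N` (using a subset of the arcs of `N`,
every non-root vertex having exactly one incoming tree arc). -/
def BinNet.IsSpanningTree (N : BinNet V) (T : V → V → Bool) : Prop :=
  (∀ u v, T u v = true → N.arc u v = true) ∧
  (∀ u, T u N.root = false) ∧
  (∀ v, v ≠ N.root → indeg T v = 1)

/-- `N` is tree-based: it has a rooted spanning tree without dummy leaves,
i.e. every leaf of the spanning tree is a leaf of `N`. -/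
def BinNet.TreeBased (N : BinNet V) : Prop :=
  ∃ T, N.IsSpanningTree T ∧ ∀ v, outdeg T v = 0 → outdeg N.arc v = 0

/-!
Choose, for every reticulation, one parent whose arc is kept; all other arcs into reticulations
are deleted. The result is a spanning tree, and it has no dummy leaf as soon as every omnian
keeps one of its (reticulate) children, which is the case when the omnians can be matched
injectively to children. Tree-vertices alone can always be so matched, by Hall's theorem: each
has two children and each vertex has at most two parents. Under the hypothesis, a child of a
tree omnian has only tree-vertex parents (if the sibling condition held at that omnian, the
sibling would be a reticulation), and a reticulation has at most one parent that is not a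
tree-vertex, so giving every other omnian an arbitrary child keeps the matching injective.
-/

open Finset Function

theorem Finset.exists_injective_of_le_card_of_card_le {ι α : Type*} [Fintype ι] [DecidableEq α]
    (t : ι → Finset α) {d : ℕ} (hd : 0 < d) (hι : ∀ i, d ≤ #(t i))
    (hα : ∀ a, #{i | a ∈ t i} ≤ d) :
    ∃ f : ι → α, Injective f ∧ ∀ i, f i ∈ t i := by
  refine (all_card_le_biUnion_card_iff_exists_injective t).mp fun s => ?_
  have hcount : #s * d ≤ #(s.biUnion t) * d :=
    card_mul_le_card_mul (fun i a => a ∈ t i)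
      (fun i hi => (hι i).trans <| card_le_card fun a ha =>
        (mem_bipartiteAbove _).mpr ⟨mem_biUnion.mpr ⟨i, hi, ha⟩, ha⟩)
      (fun a _ => le_trans (card_le_card fun i hi => by
        simpa using ((mem_bipartiteBelow _).mp hi).2) (hα a))
  exact Nat.le_of_mul_le_mul_right hcount hd

theorem indeg_ne_zero_iff {arc : V → V → Bool} {v : V} :
    indeg arc v ≠ 0 ↔ ∃ u, arc u v = true := by
  simp [indeg]

theorem outdeg_ne_zero_iff {arc : V → V → Bool} {v : V} :
    outdeg arc v ≠ 0 ↔ ∃ w, arc v w = true := by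
  simp [outdeg]

theorem eq_of_arc_of_indeg_eq_two {arc : V → V → Bool} {v a b c : V} (hv : indeg arc v = 2)
    (ha : arc a v = true) (hb : arc b v = true) (hc : arc c v = true)
    (hba : b ≠ a) (hca : c ≠ a) : b = c := by
  obtain ⟨x, y, -, hxy⟩ := Finset.card_eq_two.mp hv
  have hpar : ∀ u, arc u v = true → u = x ∨ u = y := fun u hu => by
    have : u ∈ ({u | arc u v = true} : Finset V) := by simpa using hu
    rw [hxy] at this
    simpa using this
  grind

namespace BinNet

variable (N : BinNet V)

theorem arc_root (u : V) : N.arc u N.root = false :=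
  Bool.eq_false_iff.mpr fun hu => indeg_ne_zero_iff.mpr ⟨u, hu⟩ N.root_indeg

theorem indeg_le_two (v : V) : indeg N.arc v ≤ 2 := by
  by_cases hv : v = N.root
  · simp [hv, N.root_indeg]
  · rcases N.vertex_types v hv with h | h | h <;> omega

variable {N}

theorem IsRetic.ne_root {r : V} (hr : N.IsRetic r) : r ≠ N.root := by
  rintro rfl
  simp [IsRetic, N.root_indeg] at hr

theorem IsRetic.outdeg_eq_one {r : V} (hr : N.IsRetic r) : outdeg N.arc r = 1 := by
  have : indeg N.arc r = 2 := hr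
  rcases N.vertex_types r hr.ne_root with h | h | h <;> omega

theorem IsRetic.exists_arc {r : V} (hr : N.IsRetic r) : ∃ p, N.arc p r = true :=
  indeg_ne_zero_iff.mp (by rw [show indeg N.arc r = 2 from hr]; omega)

theorem IsRetic.not_isTreeVertex {r : V} (hr : N.IsRetic r) : ¬ N.IsTreeVertex r := by
  unfold IsRetic at hr
  unfold IsTreeVertex
  omega

theorem IsRetic.not_isLeaf {r : V} (hr : N.IsRetic r) : ¬ N.IsLeaf r := by
  unfold IsLeaf
  rw [hr.outdeg_eq_one]
  omega

variable (N)

open Classical in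
noncomputable def treeOfParentChoice (par : V → V) : V → V → Bool :=
  fun u v => decide (N.arc u v = true ∧ (N.IsRetic v → u = par v))

variable {N}

theorem treeOfParentChoice_eq_true {par : V → V} {u v : V} :
    N.treeOfParentChoice par u v = true ↔ N.arc u v = true ∧ (N.IsRetic v → u = par v) := by
  simp [treeOfParentChoice]

theorem isSpanningTree_treeOfParentChoice {par : V → V}
    (hpar : ∀ r, N.IsRetic r → N.arc (par r) r = true) :
    N.IsSpanningTree (N.treeOfParentChoice par) := by
  refine ⟨fun u v h => (treeOfParentChoice_eq_true.mp h).1, fun u => ?_, fun v hv => ?_⟩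
  · simp [treeOfParentChoice, N.arc_root]
  · by_cases hr : N.IsRetic v
    · have : univ.filter (fun u => N.treeOfParentChoice par u v = true) = {par v} := by
        ext u
        simp only [mem_filter, mem_univ, true_and, mem_singleton, treeOfParentChoice_eq_true]
        exact ⟨fun h => h.2 hr, by rintro rfl; exact ⟨hpar v hr, fun _ => rfl⟩⟩
      simp [indeg, this]
    · have : univ.filter (fun u => N.treeOfParentChoice par u v = true) =
          univ.filter (fun u => N.arc u v = true) := by
        ext u
        simp [treeOfParentChoice_eq_true, hr]
      unfold IsRetic at hr
      show #(univ.filter fun u => N.treeOfParentChoice par u v = true) = 1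
      rw [this]
      rcases N.vertex_types v hv with h | h | h
      exacts [h.1, absurd h.1 hr, h.1]

theorem outdeg_treeOfParentChoice_ne_zero {par : V → V}
    (hom : ∀ v, N.IsOmnian v → ∃ r, N.arc v r = true ∧ par r = v) {v : V}
    (hv : outdeg N.arc v ≠ 0) : outdeg (N.treeOfParentChoice par) v ≠ 0 := by
  rw [outdeg_ne_zero_iff]
  by_cases hvo : N.IsOmnian v
  · obtain ⟨r, hvr, hrv⟩ := hom v hvo
    exact ⟨r, treeOfParentChoice_eq_true.mpr ⟨hvr, fun _ => hrv.symm⟩⟩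
  · obtain ⟨w, hvw, hw⟩ : ∃ w, N.arc v w = true ∧ ¬ N.IsRetic w := by
      simpa [IsOmnian, hv] using hvo
    exact ⟨w, treeOfParentChoice_eq_true.mpr ⟨hvw, fun h => absurd h hw⟩⟩

theorem treeBased_of_parentChoice (par : V → V)
    (hpar : ∀ r, N.IsRetic r → N.arc (par r) r = true)
    (hom : ∀ v, N.IsOmnian v → ∃ r, N.arc v r = true ∧ par r = v) : N.TreeBased :=
  ⟨_, isSpanningTree_treeOfParentChoice hpar,
    fun _ => not_imp_not.mp (outdeg_treeOfParentChoice_ne_zero hom)⟩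

theorem treeBased_of_injOn_omnian (g : V → V) (hg : ∀ v, N.IsOmnian v → N.arc v (g v) = true)
    (hinj : Set.InjOn g {v | N.IsOmnian v}) : N.TreeBased := by
  classical
  have : Nonempty V := ⟨N.root⟩
  choose! p hp using fun r (hr : N.IsRetic r) => hr.exists_arc
  let par r := if r ∈ g '' {v | N.IsOmnian v} then invFunOn g {v | N.IsOmnian v} r else p r
  refine treeBased_of_parentChoice par (fun r hr => ?_) (fun v hv => ⟨g v, hg v hv, ?_⟩)
  · by_cases him : r ∈ g '' {v | N.IsOmnian v}
    · simp only [par, him, if_true]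
      have hpar := hg _ (invFunOn_mem him)
      rwa [invFunOn_eq him] at hpar
    · simpa only [par, him, if_false] using hp r hr
  · have him : g v ∈ g '' {v | N.IsOmnian v} := Set.mem_image_of_mem g hv
    simp only [par, him, if_true]
    exact hinj.leftInvOn_invFunOn hv

theorem exists_injective_arc_of_isTreeVertex :
    ∃ f : {v // N.IsTreeVertex v} → V, Injective f ∧ ∀ v, N.arc v.1 (f v) = true := by
  classical
  obtain ⟨f, hf, hft⟩ := exists_injective_of_le_card_of_card_le
    (fun v : {v // N.IsTreeVertex v} => univ.filter fun w => N.arc v w = true) two_pos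
    (fun v => v.2.2.2.ge) fun a => calc
      _ ≤ #(univ.filter fun u => N.arc u a = true) :=
        card_le_card_of_injOn Subtype.val (fun v hv => by simpa using hv)
          Subtype.val_injective.injOn
      _ ≤ 2 := N.indeg_le_two a
  exact ⟨f, hf, fun v => (mem_filter.mp (hft v)).2⟩

variable (N) in
def SiblingCondition : Prop :=
  ∀ r, N.IsRetic r →
    (∀ p, N.arc p r = true → N.IsTreeVertex p) ∨
    (∃ p, N.arc p r = true ∧ N.IsTreeVertex p ∧
      ∀ s, N.arc p s = true → s ≠ r → (N.IsTreeVertex s ∨ N.IsLeaf s))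

namespace SiblingCondition

variable {r : V}

theorem exists_isTreeVertex_arc (h : N.SiblingCondition) (hr : N.IsRetic r) :
    ∃ p, N.arc p r = true ∧ N.IsTreeVertex p := by
  rcases h r hr with hall | ⟨p, hp, hpt, -⟩
  · obtain ⟨p, hp⟩ := hr.exists_arc
    exact ⟨p, hp, hall p hp⟩
  · exact ⟨p, hp, hpt⟩

theorem eq_of_arc_of_not_isTreeVertex (h : N.SiblingCondition) (hr : N.IsRetic r) {p q : V}
    (hp : N.arc p r = true) (hpt : ¬ N.IsTreeVertex p) (hq : N.arc q r = true)
    (hqt : ¬ N.IsTreeVertex q) : p = q := by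
  obtain ⟨t, ht, htt⟩ := h.exists_isTreeVertex_arc hr
  exact eq_of_arc_of_indeg_eq_two hr ht hp hq (by rintro rfl; exact hpt htt)
    (by rintro rfl; exact hqt htt)

theorem isTreeVertex_of_arc_of_isOmnian (h : N.SiblingCondition) {v q : V}
    (hv : N.IsTreeVertex v) (hvo : N.IsOmnian v) (hvr : N.arc v r = true)
    (hqr : N.arc q r = true) : N.IsTreeVertex q := by
  have hr := hvo.2 r hvr
  rcases h r hr with hall | ⟨p, hpr, hpt, hsib⟩
  · exact hall q hqr
  by_contra hqt
  obtain rfl : p = v := eq_of_arc_of_indeg_eq_two hr hqr hpr hvr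
    (by rintro rfl; exact hqt hpt) (by rintro rfl; exact hqt hv)
  obtain ⟨s, hs, hsr⟩ := exists_mem_ne (show 1 < outdeg N.arc p by rw [hv.2.2]; omega) r
  have hps : N.arc p s = true := (mem_filter.mp hs).2
  have hsret := hvo.2 s hps
  rcases hsib s hps hsr with hst | hsl
  exacts [hsret.not_isTreeVertex hst, hsret.not_isLeaf hsl]

theorem exists_injOn_omnian (h : N.SiblingCondition) :
    ∃ g : V → V, (∀ v, N.IsOmnian v → N.arc v (g v) = true) ∧
      Set.InjOn g {v | N.IsOmnian v} := by
  classical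
  obtain ⟨f, hf, hfa⟩ := N.exists_injective_arc_of_isTreeVertex
  choose! c hc using fun v (hv : N.IsOmnian v) => outdeg_ne_zero_iff.mp hv.1
  refine ⟨fun v => if hv : N.IsTreeVertex v then f ⟨v, hv⟩ else c v, fun v hv => ?_,
    fun v hv w hw hvw => ?_⟩
  · by_cases hvt : N.IsTreeVertex v <;> simp [hvt, hfa ⟨v, _⟩, hc v hv]
  by_cases hvt : N.IsTreeVertex v <;> by_cases hwt : N.IsTreeVertex w <;>
    simp only [hvt, hwt, dite_true, dite_false] at hvw
  · exact congrArg Subtype.val (hf hvw)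
  · exact absurd
      (h.isTreeVertex_of_arc_of_isOmnian hvt hv (hfa ⟨v, hvt⟩) (hvw ▸ hc w hw)) hwt
  · exact absurd
      (h.isTreeVertex_of_arc_of_isOmnian hwt hw (hfa ⟨w, hwt⟩) (hvw ▸ hc v hv)) hvt
  · exact h.eq_of_arc_of_not_isTreeVertex (hv.2 _ (hc v hv)) (hc v hv) hvt (hvw ▸ hc w hw) hwt

end SiblingCondition

end BinNet

/-- If for every reticulation `r` of a binary phylogenetic network `N`
either (i) both parents of `r` are tree-vertices, or (ii) one parent of `r` is a
tree-vertex such that the sibling of `r` under that parent is a tree-vertex or a leaf,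
then `N` is tree-based. -/
theorem stmt_8 {V : Type} [Fintype V] [DecidableEq V] (N : BinNet V)
    (h : ∀ r, N.IsRetic r →
      (∀ p, N.arc p r = true → N.IsTreeVertex p) ∨
      (∃ p, N.arc p r = true ∧ N.IsTreeVertex p ∧
        ∀ s, N.arc p s = true → s ≠ r → (N.IsTreeVertex s ∨ N.IsLeaf s))) :
    N.TreeBased := by
  obtain ⟨g, hg, hinj⟩ := BinNet.SiblingCondition.exists_injOn_omnian h
  exact N.treeBased_of_injOn_omnian g hg hinj
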